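/- arXiv:2101.05654 — 5 statements merged into one kernel-verified Lean document; each statement's English description precedes it below -/
import Mathlib

section
/- Let n ≥ 1 and let B_1, …, B_n be real p×2 matrices such that the p×p matrix B = ∑_{i=1}^n B_i B_iᵀ is invertible, and let M₀ be a real p×p matrix. Then for every family A_1, …, A_n of real p×2 matrices satisfying the constraint ∑_{i=1}^n A_i B_iᵀ = M₀, the matrix ∑_{i=1}^n A_i A_iᵀ − M₀ B⁻¹ M₀ᵀ is positive semidefinite. -/
open Matrix BigOperators

/-- Core optimization step of Theorem 4.2: among all families `A` of `p × 2` matrices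
satisfying the unbiasedness constraint `∑ Aᵢ Bᵢᵀ = M₀`, the "variance part" `∑ Aᵢ Aᵢᵀ`
is bounded below (in the Loewner ordering) by `M₀ B⁻¹ M₀ᵀ`, where `B = ∑ Bᵢ Bᵢᵀ`. -/
theorem optimal_weights_loewner_bound
    (p n : ℕ) (hn : 1 ≤ n)
    (B : Fin n → Matrix (Fin p) (Fin 2) ℝ)
    (M0 : Matrix (Fin p) (Fin p) ℝ)
    (hB : IsUnit (∑ i, B i * (B i)ᵀ))
    (A : Fin n → Matrix (Fin p) (Fin 2) ℝ)
    (hA : ∑ i, A i * (B i)ᵀ = M0) :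
    ((∑ i, A i * (A i)ᵀ) - M0 * (∑ i, B i * (B i)ᵀ)⁻¹ * M0ᵀ).PosSemidef := by
  set S : Matrix (Fin p) (Fin p) ℝ := ∑ i, B i * (B i)ᵀ with hS
  have hSsymm : Sᵀ = S := by
    simp [hS, Matrix.transpose_sum, Matrix.transpose_mul]
  have hSinv : S * S⁻¹ = 1 := Matrix.mul_nonsing_inv S (isUnit_iff_isUnit_det S |>.mp hB)
  have hSinv' : S⁻¹ * S = 1 := Matrix.nonsing_inv_mul S (isUnit_iff_isUnit_det S |>.mp hB)
  have hSinvsymm : (S⁻¹)ᵀ = S⁻¹ := by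
    rw [Matrix.transpose_nonsing_inv, hSsymm]
  set C : Matrix (Fin p) (Fin p) ℝ := M0 * S⁻¹ with hC
  have key : (∑ i, A i * (A i)ᵀ) - M0 * S⁻¹ * M0ᵀ
      = ∑ i, (A i - C * B i) * (A i - C * B i)ᵀ := by
    have expand : ∀ i, (A i - C * B i) * (A i - C * B i)ᵀ
        = A i * (A i)ᵀ - A i * (B i)ᵀ * Cᵀ - C * (B i * (A i)ᵀ) + C * (B i * (B i)ᵀ) * Cᵀ := by
      intro i
      simp only [Matrix.transpose_sub, Matrix.transpose_mul, Matrix.sub_mul, Matrix.mul_sub,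
        Matrix.mul_assoc]
      abel
    rw [Finset.sum_congr rfl (fun i _ => expand i)]
    have hBA : ∑ i, B i * (A i)ᵀ = M0ᵀ := by
      have := congrArg Matrix.transpose hA
      simpa [Matrix.transpose_sum, Matrix.transpose_mul] using this
    have hCS : C * S = M0 := by rw [hC, Matrix.mul_assoc, hSinv', Matrix.mul_one]
    have hCt : Cᵀ = S⁻¹ * M0ᵀ := by rw [hC, Matrix.transpose_mul, hSinvsymm]
    have h4 : ∑ x, C * (B x * (B x)ᵀ) * Cᵀ = M0 * S⁻¹ * M0ᵀ := by
      rw [← Finset.sum_mul, ← Finset.mul_sum, ← hS, hCS, hCt, ← Matrix.mul_assoc]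
    rw [Finset.sum_add_distrib, Finset.sum_sub_distrib, Finset.sum_sub_distrib,
      ← Finset.sum_mul, hA, ← Finset.mul_sum, hBA, h4, hCt, hC, ← Matrix.mul_assoc]
    abel
  rw [key]
  apply Finset.sum_induction _ Matrix.PosSemidef
  · exact fun a b ha hb => ha.add hb
  · exact Matrix.PosSemidef.zero
  · intro i _
    have := Matrix.posSemidef_self_mul_conjTranspose (A i - C * B i)
    simpa [Matrix.conjTranspose_eq_transpose_of_trivial] using this
end

section
/- Let a = t_0 < t_1 < … < t_n = b be real numbers, let F : ℝ → ℝ^{p×2} be a matrix-valued function, let Σ be a positive definite real 2×2 matrix, and set ΔF_i := F(t_i) − F(t_{i−1}) and Δ_i := t_i − t_{i−1} for i = 1, …, n. Assume that the p×p matrix B := ∑_{i=1}^n ΔF_i Σ⁻¹ ΔF_iᵀ / Δ_i is invertible and let M₀ be a p×p real matrix. Then: (a) for every family Φ_1, …, Φ_n of real p×2 matrices satisfying ∑_{i=1}^n Φ_i Σ⁻¹ ΔF_iᵀ = M₀, the matrix ∑_{i=1}^n Δ_i Φ_i Σ⁻¹ Φ_iᵀ − M₀ B⁻¹ M₀ᵀ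 is positive semidefinite; and (b) the matrices Φ_i* := M₀ B⁻¹ ΔF_i / Δ_i satisfy ∑_{i=1}^n Φ_i* Σ⁻¹ ΔF_iᵀ = M₀ and ∑_{i=1}^n Δ_i Φ_i* Σ⁻¹ Φ_i*ᵀ = M₀ B⁻¹ M₀ᵀ. -/
/-! Everything is expressed through the weighted Gram matrix `G(Φ, Ψ) = ∑ Δᵢ Φᵢ Σ⁻¹ Ψᵢᵀ`.
Because `Φ*ᵢ` is `Δᵢ⁻¹ M₀ B⁻¹ ΔFᵢ`, the cross term `G(Φ, Φ*)` only sees `∑ Φᵢ Σ⁻¹ ΔFᵢᵀ`,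
so it equals `M₀ B⁻¹ M₀ᵀ` for every unbiased `Φ`, in particular for `Φ*` itself. Expanding
`G(Φ - Φ*, Φ - Φ*)` then gives `G(Φ, Φ) - M₀ B⁻¹ M₀ᵀ`, which is positive semidefinite as a
Gram matrix with positive weights: the Gauss–Markov argument. -/

open Matrix

namespace Matrix

variable {ι m n R : Type*} [Fintype ι] [Fintype n]

def weightedGram [CommSemiring R] (w : ι → R) (C : Matrix n n R) (Φ Ψ : ι → Matrix m n R) :
    Matrix m m R :=
  ∑ i, w i • (Φ i * C * (Ψ i)ᵀ)

section CommSemiring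

variable [CommSemiring R] (w : ι → R) (C : Matrix n n R) (Φ Ψ : ι → Matrix m n R)

theorem transpose_weightedGram : (weightedGram w C Φ Ψ)ᵀ = weightedGram w Cᵀ Ψ Φ := by
  simp only [weightedGram, transpose_sum, transpose_smul, transpose_mul, transpose_transpose,
    Matrix.mul_assoc]

end CommSemiring

section CommRing

variable [CommRing R] {w : ι → R} {C : Matrix n n R}

theorem weightedGram_sub_sub (Φ Ψ : ι → Matrix m n R) :
    weightedGram w C (Φ - Ψ) (Φ - Ψ) =
      weightedGram w C Φ Φ - weightedGram w C Φ Ψ - weightedGram w C Ψ Φ +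
        weightedGram w C Ψ Ψ := by
  simp only [weightedGram, ← Finset.sum_sub_distrib, ← Finset.sum_add_distrib, Pi.sub_apply,
    transpose_sub, Matrix.sub_mul, Matrix.mul_sub, smul_sub]
  exact Finset.sum_congr rfl fun i _ => by abel

theorem weightedGram_sub_eq_of_cross_eq (hC : Cᵀ = C) {Φ Ψ : ι → Matrix m n R}
    {X : Matrix m m R} (hΦΨ : weightedGram w C Φ Ψ = X) (hΨΨ : weightedGram w C Ψ Ψ = X) :
    weightedGram w C (Φ - Ψ) (Φ - Ψ) = weightedGram w C Φ Φ - X := by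
  have hΨΦ : weightedGram w C Ψ Φ = X := by
    rw [← hC, ← transpose_weightedGram, hΦΨ, ← hΨΨ, transpose_weightedGram, hC]
  rw [weightedGram_sub_sub, hΦΨ, hΨΦ, hΨΨ]
  abel

end CommRing

section Field

variable [Field R] {k : Type*} [Fintype m] (C : Matrix n n R) (K : Matrix k m R)
  (D : ι → Matrix m n R)

theorem sum_inv_smul_mul_mul_transpose (w : ι → R) :
    ∑ i, ((w i)⁻¹ • (K * D i)) * C * (D i)ᵀ = K * weightedGram (fun i => (w i)⁻¹) C D D := by
  simp only [weightedGram, Matrix.mul_sum, Matrix.smul_mul, Matrix.mul_smul, Matrix.mul_assoc]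

theorem weightedGram_inv_smul_right {w : ι → R} (hw : ∀ i, w i ≠ 0) (Φ : ι → Matrix k n R) :
    weightedGram w C Φ (fun i => (w i)⁻¹ • (K * D i)) = (∑ i, Φ i * C * (D i)ᵀ) * Kᵀ := by
  simp only [weightedGram, Matrix.sum_mul, transpose_smul, transpose_mul, Matrix.mul_smul,
    smul_smul, mul_inv_cancel₀ (hw _), one_smul, Matrix.mul_assoc]

end Field

theorem posSemidef_weightedGram [Fintype m] {w : ι → ℝ} (hw : ∀ i, 0 ≤ w i) {C : Matrix n n ℝ}
    (hC : C.PosSemidef) (Φ : ι → Matrix m n ℝ) : (weightedGram w C Φ Φ).PosSemidef :=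
  posSemidef_sum _ fun i _ => by
    simpa only [conjTranspose_eq_transpose_of_trivial] using
      (hC.mul_mul_conjTranspose_same (Φ i)).smul (hw i)

end Matrix

theorem optimal_weights_discrete_estimator_general
    (p n : ℕ)
    (t : Fin (n + 1) → ℝ) (ht : StrictMono t)
    (Sig : Matrix (Fin 2) (Fin 2) ℝ) (hSig : Sig.PosDef)
    (ΔF : Fin n → Matrix (Fin p) (Fin 2) ℝ)
    (Δ : Fin n → ℝ) (hΔ : ∀ i : Fin n, Δ i = t i.succ - t i.castSucc)
    (Bm : Matrix (Fin p) (Fin p) ℝ)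
    (hBm : Bm = ∑ i, (Δ i)⁻¹ • (ΔF i * Sig⁻¹ * (ΔF i)ᵀ))
    (hB : IsUnit Bm)
    (M0 : Matrix (Fin p) (Fin p) ℝ) :
    (∀ Φ : Fin n → Matrix (Fin p) (Fin 2) ℝ,
        (∑ i, Φ i * Sig⁻¹ * (ΔF i)ᵀ) = M0 →
        ((∑ i, Δ i • (Φ i * Sig⁻¹ * (Φ i)ᵀ)) - M0 * Bm⁻¹ * M0ᵀ).PosSemidef) ∧
    ((∑ i, ((Δ i)⁻¹ • (M0 * Bm⁻¹ * ΔF i)) * Sig⁻¹ * (ΔF i)ᵀ) = M0 ∧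
      (∑ i, Δ i • (((Δ i)⁻¹ • (M0 * Bm⁻¹ * ΔF i)) * Sig⁻¹ * ((Δ i)⁻¹ • (M0 * Bm⁻¹ * ΔF i))ᵀ))
        = M0 * Bm⁻¹ * M0ᵀ) := by
  have hΔpos : ∀ i, 0 < Δ i := fun i => (hΔ i).symm ▸ sub_pos.2 (ht i.castSucc_lt_succ)
  have hC : (Sig⁻¹)ᵀ = Sig⁻¹ := hSig.inv.isHermitian.eq
  have hBm' : Bm = weightedGram (fun i => (Δ i)⁻¹) Sig⁻¹ ΔF ΔF := hBm
  have hBsymm : Bmᵀ = Bm := by rw [hBm', transpose_weightedGram, hC]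
  set Φopt : Fin n → Matrix (Fin p) (Fin 2) ℝ := fun i => (Δ i)⁻¹ • (M0 * Bm⁻¹ * ΔF i)
  have unbiased : ∑ i, Φopt i * Sig⁻¹ * (ΔF i)ᵀ = M0 := by
    rw [sum_inv_smul_mul_mul_transpose, ← hBm', Matrix.mul_assoc,
      nonsing_inv_mul _ ((isUnit_iff_isUnit_det _).1 hB), Matrix.mul_one]
  have cross : ∀ Φ : Fin n → Matrix (Fin p) (Fin 2) ℝ, ∑ i, Φ i * Sig⁻¹ * (ΔF i)ᵀ = M0 →
      weightedGram Δ Sig⁻¹ Φ Φopt = M0 * Bm⁻¹ * M0ᵀ := fun Φ hΦ => by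
    rw [weightedGram_inv_smul_right _ _ _ (fun i => (hΔpos i).ne'), hΦ, transpose_mul,
      transpose_nonsing_inv, hBsymm, Matrix.mul_assoc]
  refine ⟨fun Φ hΦ => ?_, unbiased, cross Φopt unbiased⟩
  convert posSemidef_weightedGram (fun i => (hΔpos i).le) hSig.inv.posSemidef (Φ - Φopt) using 1
  exact (weightedGram_sub_eq_of_cross_eq hC (cross Φ hΦ) (cross Φopt unbiased)).symm

/-- Theorem 4.2 in terms of the original weight matrices `Φᵢ` of the discrete linear
estimator: (a) any family of weights satisfying the unbiasedness condition
`∑ Φᵢ Σ⁻¹ ΔFᵢᵀ = M₀` has variance contribution `∑ Δᵢ Φᵢ Σ⁻¹ Φᵢᵀ` bounded below in the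
Loewner ordering by `M₀ B⁻¹ M₀ᵀ`, and (b) the weights `Φᵢ* = M₀ B⁻¹ ΔFᵢ / Δᵢ` are
unbiased and attain this bound, where `ΔFᵢ = F(tᵢ) − F(tᵢ₋₁)`, `Δᵢ = tᵢ − tᵢ₋₁` and
`B = ∑ ΔFᵢ Σ⁻¹ ΔFᵢᵀ / Δᵢ`. -/
theorem optimal_weights_discrete_estimator
    (p n : ℕ) (hn : 1 ≤ n) (a b : ℝ)
    (t : Fin (n + 1) → ℝ) (ht : StrictMono t) (hta : t 0 = a) (htb : t (Fin.last n) = b)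
    (F : ℝ → Matrix (Fin p) (Fin 2) ℝ)
    (Sig : Matrix (Fin 2) (Fin 2) ℝ) (hSig : Sig.PosDef)
    (ΔF : Fin n → Matrix (Fin p) (Fin 2) ℝ)
    (hΔF : ∀ i : Fin n, ΔF i = F (t i.succ) - F (t i.castSucc))
    (Δ : Fin n → ℝ) (hΔ : ∀ i : Fin n, Δ i = t i.succ - t i.castSucc)
    (Bm : Matrix (Fin p) (Fin p) ℝ)
    (hBm : Bm = ∑ i, (Δ i)⁻¹ • (ΔF i * Sig⁻¹ * (ΔF i)ᵀ))
    (hB : IsUnit Bm)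
    (M0 : Matrix (Fin p) (Fin p) ℝ) :
    (∀ Φ : Fin n → Matrix (Fin p) (Fin 2) ℝ,
        (∑ i, Φ i * Sig⁻¹ * (ΔF i)ᵀ) = M0 →
        ((∑ i, Δ i • (Φ i * Sig⁻¹ * (Φ i)ᵀ)) - M0 * Bm⁻¹ * M0ᵀ).PosSemidef) ∧
    ((∑ i, ((Δ i)⁻¹ • (M0 * Bm⁻¹ * ΔF i)) * Sig⁻¹ * (ΔF i)ᵀ) = M0 ∧
      (∑ i, Δ i • (((Δ i)⁻¹ • (M0 * Bm⁻¹ * ΔF i)) * Sig⁻¹ * ((Δ i)⁻¹ • (M0 * Bm⁻¹ * ΔF i))ᵀ))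
        = M0 * Bm⁻¹ * M0ᵀ) :=
  optimal_weights_discrete_estimator_general p n t ht Sig hSig ΔF Δ hΔ Bm hBm hB M0
end

section
/- Let 0 < a < b, σ1, σ2 > 0, ρ ∈ (−1, 1), and let f1 : ℝ → ℝ^{p1} and f2 : ℝ → ℝ^{p2} be continuously differentiable on [a, b]. Let Σ = [[σ1², ρσ1σ2], [ρσ1σ2, σ2²]], let F : ℝ → ℝ^{(p1+p2)×2} be the matrix whose first column is (f1(t)ᵀ, 0)ᵀ and whose second column is (0, f2(t)ᵀ)ᵀ, and define the joint information matrix M := ∫_a^b Ḟ(t) Σ⁻¹ Ḟ(t)ᵀ dt + (1/a)·F(a) Σ⁻¹ F(a)ᵀ and the marginal information matrix M11 := ∫_a^b ḟ1(t) ḟ1(t)ᵀ dt + (1/a)·f1(a) f1(a)ᵀ. If M and M11 are invertible, then σ1²·M11⁻¹ minus the top-left p1×p1 block of M⁻¹ is positive semidefinite. -/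
/-!
For the 2 × 2 covariance `Σ`, `v ⬝ Σ⁻¹ v - v₀² / σ1² = (ρ σ2 v₀ - σ1 v₁)² / det Σ ≥ 0`.
The first column of `F(t)` is `(f1(t), 0)`, so applying this to `Ḟ(t)ᵀ z` and `F(a)ᵀ z` and
integrating gives `z ⬝ M z ≥ z₁ ⬝ N z₁` for every `z = (z₁, z₂)`, where `N = σ1⁻² M11`.
Such a bound on the first block inverts: for `z = M⁻¹ (x, 0)` one has
`x ⬝ (M⁻¹)₁₁ x = z ⬝ M z = x ⬝ z₁ ≥ z₁ ⬝ N z₁`, and expanding `0 ≤ (z₁ - w) ⬝ N (z₁ - w)` with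
`w = N⁻¹ x` yields `x ⬝ z₁ ≤ x ⬝ N⁻¹ x = σ1² x ⬝ M11⁻¹ x`.
-/

open Matrix MeasureTheory intervalIntegral

section Loewner

variable {ι₁ ι₂ : Type*} [Fintype ι₁] [Fintype ι₂] [DecidableEq ι₁] [DecidableEq ι₂]

theorem posSemidef_inv_sub_toBlocks₁₁_inv {M : Matrix (ι₁ ⊕ ι₂) (ι₁ ⊕ ι₂) ℝ}
    {N : Matrix ι₁ ι₁ ℝ} (hM : M.IsHermitian) (hMu : IsUnit M) (hN : N.PosSemidef)
    (hNu : IsUnit N)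
    (hle : ∀ z : ι₁ ⊕ ι₂ → ℝ, (z ∘ Sum.inl) ⬝ᵥ N *ᵥ (z ∘ Sum.inl) ≤ z ⬝ᵥ M *ᵥ z) :
    (N⁻¹ - M⁻¹.toBlocks₁₁).PosSemidef := by
  have hM_inv : (fromBlocks M⁻¹.toBlocks₁₁ M⁻¹.toBlocks₁₂ M⁻¹.toBlocks₂₁
      M⁻¹.toBlocks₂₂).IsHermitian := by
    rw [fromBlocks_toBlocks]; exact hM.inv
  refine posSemidef_iff_dotProduct_mulVec.2
    ⟨hN.1.inv.sub (isHermitian_fromBlocks_iff.1 hM_inv).1, fun x => ?_⟩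
  set z := M⁻¹ *ᵥ Sum.elim x 0
  have hMz : M *ᵥ z = Sum.elim x 0 := by
    rw [mulVec_mulVec, mul_nonsing_inv _ ((isUnit_iff_isUnit_det M).1 hMu), one_mulVec]
  have hNw : N *ᵥ (N⁻¹ *ᵥ x) = x := by
    rw [mulVec_mulVec, mul_nonsing_inv _ ((isUnit_iff_isUnit_det N).1 hNu), one_mulVec]
  have hblock : M⁻¹.toBlocks₁₁ *ᵥ x = z ∘ Sum.inl := by
    ext i; simp [z, mulVec, dotProduct, toBlocks₁₁, Fintype.sum_sum_type]
  have hzMz : z ⬝ᵥ M *ᵥ z = x ⬝ᵥ (z ∘ Sum.inl) := by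
    rw [hMz]; simp [dotProduct, Fintype.sum_sum_type, mul_comm]
  have hsq := hN.dotProduct_mulVec_nonneg (z ∘ Sum.inl - N⁻¹ *ᵥ x)
  have hsymm : N⁻¹ *ᵥ x ⬝ᵥ N *ᵥ (z ∘ Sum.inl) = (z ∘ Sum.inl) ⬝ᵥ N *ᵥ (N⁻¹ *ᵥ x) := by
    rw [dotProduct_mulVec, ← mulVec_transpose, ← conjTranspose_eq_transpose_of_trivial,
      hN.1.eq, dotProduct_comm]
  simp only [star_trivial, mulVec_sub, dotProduct_sub, sub_dotProduct, hNw, hsymm] at hsq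
  rw [dotProduct_comm (z ∘ Sum.inl) x, dotProduct_comm (N⁻¹ *ᵥ x) x] at hsq
  rw [star_trivial, sub_mulVec, dotProduct_sub, hblock]
  linarith [hzMz ▸ hle z]

theorem posSemidef_smul_inv_sub_toBlocks₁₁_inv {M : Matrix (ι₁ ⊕ ι₂) (ι₁ ⊕ ι₂) ℝ}
    {N : Matrix ι₁ ι₁ ℝ} {c : ℝ} (hc : 0 < c) (hM : M.IsHermitian) (hMu : IsUnit M)
    (hN : N.PosSemidef) (hNu : IsUnit N)
    (hle : ∀ z : ι₁ ⊕ ι₂ → ℝ, c⁻¹ * ((z ∘ Sum.inl) ⬝ᵥ N *ᵥ (z ∘ Sum.inl)) ≤ z ⬝ᵥ M *ᵥ z) :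
    (c • N⁻¹ - M⁻¹.toBlocks₁₁).PosSemidef := by
  have hc' : c⁻¹ ≠ 0 := inv_ne_zero hc.ne'
  have hinv : (c⁻¹ • N)⁻¹ = c • N⁻¹ := by
    simpa [Units.smul_def] using inv_smul' N (Units.mk0 _ hc') ((isUnit_iff_isUnit_det _).1 hNu)
  rw [← hinv]
  refine posSemidef_inv_sub_toBlocks₁₁_inv hM hMu (hN.smul (inv_nonneg.2 hc.le))
    (by simpa using hNu.smul (Units.mk0 _ hc')) fun z => ?_
  simpa only [smul_mulVec, dotProduct_smul, smul_eq_mul] using hle z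

end Loewner

theorem inv_sq_mul_sq_le_dotProduct_inv_mulVec {σ1 σ2 ρ : ℝ} (hσ1 : 0 < σ1) (hσ2 : 0 < σ2)
    (hρ : ρ ∈ Set.Ioo (-1 : ℝ) 1) (v : Fin 2 → ℝ) :
    (σ1 ^ 2)⁻¹ * v 0 ^ 2 ≤ v ⬝ᵥ (!![σ1 ^ 2, ρ * σ1 * σ2; ρ * σ1 * σ2, σ2 ^ 2])⁻¹ *ᵥ v := by
  have hρ2 : 0 < 1 - ρ ^ 2 := by nlinarith [hρ.1, hρ.2]
  have hdet : 0 < σ1 ^ 2 * σ2 ^ 2 * (1 - ρ ^ 2) := by positivity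
  have hquad : v ⬝ᵥ (!![σ1 ^ 2, ρ * σ1 * σ2; ρ * σ1 * σ2, σ2 ^ 2])⁻¹ *ᵥ v
      = (σ2 ^ 2 * v 0 ^ 2 - 2 * ρ * σ1 * σ2 * v 0 * v 1 + σ1 ^ 2 * v 1 ^ 2)
        / (σ1 ^ 2 * σ2 ^ 2 * (1 - ρ ^ 2)) := by
    rw [inv_def, det_fin_two_of, adjugate_fin_two_of, Ring.inverse_eq_inv]
    have := hρ2.ne'
    simp [dotProduct, mulVec, Fin.sum_univ_two]
    field_simp
    ring
  rw [hquad, le_div_iff₀ hdet, inv_mul_eq_div, div_mul_eq_mul_div, div_le_iff₀ (by positivity)]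
  nlinarith [sq_nonneg (ρ * σ2 * v 0 - σ1 * v 1), sq_nonneg σ1]

theorem intervalIntegrable_comp_entrywise_deriv {m n E : Type*} [NormedAddCommGroup E]
    {a b : ℝ} (hab : a < b) {F D : ℝ → Matrix m n ℝ}
    (hF : ∀ i j, ContDiffOn ℝ 1 (fun t => F t i j) (Set.Icc a b))
    (hD : ∀ t i j, D t i j = deriv (fun s => F s i j) t) {φ : Matrix m n ℝ → E}
    (hφ : Continuous φ) : IntervalIntegrable (fun t => φ (D t)) volume a b := by
  have hD' : ContinuousOn (fun t => of fun i j => derivWithin (fun s => F s i j) (Set.Icc a b) t)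
      (Set.Icc a b) := continuousOn_pi.2 fun i => continuousOn_pi.2
    fun j => (hF i j).continuousOn_derivWithin (uniqueDiffOn_Icc hab) le_rfl
  refine (intervalIntegrable_congr_uIoo fun t ht => ?_).2
    ((hφ.comp_continuousOn hD').intervalIntegrable_of_Icc hab.le)
  rw [Set.uIoo_of_le hab.le] at ht
  have hIcc : Set.Icc a b ∈ nhds t := Icc_mem_nhds ht.1 ht.2
  simp only [Function.comp_apply]
  congr 1
  ext i j
  rw [hD, of_apply, derivWithin_of_mem_nhds hIcc]

section QuadraticForm

variable {n : Type*} [Fintype n] {a b : ℝ} {g : ℝ → Matrix n n ℝ}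

theorem IntervalIntegrable.mulVec
    (hg : ∀ i j, IntervalIntegrable (fun t => g t i j) volume a b) (z : n → ℝ) (i : n) :
    IntervalIntegrable (fun t => (g t *ᵥ z) i) volume a b := by
  have h := IntervalIntegrable.sum Finset.univ fun j _ => (hg i j).mul_const (z j)
  rwa [Finset.sum_fn] at h

theorem IntervalIntegrable.dotProduct_mulVec
    (hg : ∀ i j, IntervalIntegrable (fun t => g t i j) volume a b) (z : n → ℝ) :
    IntervalIntegrable (fun t => z ⬝ᵥ g t *ᵥ z) volume a b := by
  simpa only [Finset.sum_fn, dotProduct] using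
    IntervalIntegrable.sum _ fun i _ => (IntervalIntegrable.mulVec hg z i).const_mul (z i)

theorem dotProduct_intervalIntegral_mulVec
    (hg : ∀ i j, IntervalIntegrable (fun t => g t i j) volume a b) (z : n → ℝ) :
    z ⬝ᵥ (of fun i j => ∫ t in a..b, g t i j) *ᵥ z = ∫ t in a..b, z ⬝ᵥ g t *ᵥ z := by
  simp only [dotProduct]
  rw [integral_finsetSum fun i _ => (IntervalIntegrable.mulVec hg z i).const_mul (z i)]
  congr 1; ext i
  simp only [mulVec, dotProduct, of_apply]
  rw [intervalIntegral.integral_const_mul, integral_finsetSum fun j _ => (hg i j).mul_const (z j)]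
  simp only [intervalIntegral.integral_mul_const]

end QuadraticForm

theorem dotProduct_mul_mul_transpose_mulVec {m k : Type*} [Fintype m] [Fintype k]
    (A : Matrix m k ℝ) (S : Matrix k k ℝ) (z : m → ℝ) :
    z ⬝ᵥ (A * S * Aᵀ) *ᵥ z = (Aᵀ *ᵥ z) ⬝ᵥ S *ᵥ (Aᵀ *ᵥ z) := by
  rw [← mulVec_mulVec, ← mulVec_mulVec, dotProduct_mulVec, ← mulVec_transpose]

theorem dotProduct_vecMulVec_self_mulVec {m : Type*} [Fintype m] (u z : m → ℝ) :
    z ⬝ᵥ vecMulVec u u *ᵥ z = (u ⬝ᵥ z) ^ 2 := by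
  rw [vecMulVec_mulVec, op_smul_eq_smul, dotProduct_smul, smul_eq_mul, dotProduct_comm, sq]

theorem mul_dotProduct_vecMulVec_le {ι₁ ι₂ k : Type*} [Fintype ι₁] [Fintype ι₂] [Fintype k]
    {S : Matrix k k ℝ} {c : ℝ} {l : k} (hS : ∀ v, c * v l ^ 2 ≤ v ⬝ᵥ S *ᵥ v)
    (A : Matrix (ι₁ ⊕ ι₂) k ℝ) (hA : ∀ i, A (Sum.inr i) l = 0) (z : ι₁ ⊕ ι₂ → ℝ) :
    c * ((z ∘ Sum.inl) ⬝ᵥ vecMulVec (fun i => A (Sum.inl i) l) (fun i => A (Sum.inl i) l) *ᵥ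
      (z ∘ Sum.inl)) ≤ z ⬝ᵥ (A * S * Aᵀ) *ᵥ z := by
  have hcol : (Aᵀ *ᵥ z) l = (fun i => A (Sum.inl i) l) ⬝ᵥ (z ∘ Sum.inl) := by
    simp [mulVec, dotProduct, Fintype.sum_sum_type, hA]
  rw [dotProduct_vecMulVec_self_mulVec, ← hcol, dotProduct_mul_mul_transpose_mulVec]
  exact hS _


section InformationMatrix

variable {n m : Type*} [Fintype n] [Fintype m] {a b : ℝ}

noncomputable def infoMatrix (a b : ℝ) (G : ℝ → Matrix n n ℝ) (G₀ : Matrix n n ℝ) : Matrix n n ℝ :=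
  (of fun i j => ∫ t in a..b, G t i j) + (1 / a) • G₀

omit [Fintype n] in
theorem isHermitian_infoMatrix {G : ℝ → Matrix n n ℝ} {G₀ : Matrix n n ℝ}
    (hG : ∀ t, (G t).IsHermitian) (hG₀ : G₀.IsHermitian) :
    (infoMatrix a b G G₀).IsHermitian := by
  refine IsHermitian.add ?_ (hG₀.smul (.all _))
  ext i j
  simp only [conjTranspose_apply, of_apply, star_trivial]
  exact integral_congr fun t _ => by simpa using (hG t).apply i j

theorem dotProduct_infoMatrix_mulVec {G : ℝ → Matrix n n ℝ} {G₀ : Matrix n n ℝ}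
    (hG : ∀ i j, IntervalIntegrable (fun t => G t i j) volume a b) (z : n → ℝ) :
    z ⬝ᵥ infoMatrix a b G G₀ *ᵥ z = (∫ t in a..b, z ⬝ᵥ G t *ᵥ z) + 1 / a * (z ⬝ᵥ G₀ *ᵥ z) := by
  rw [infoMatrix, add_mulVec, dotProduct_add, smul_mulVec, dotProduct_smul, smul_eq_mul,
    dotProduct_intervalIntegral_mulVec hG]

theorem posSemidef_infoMatrix (ha : 0 ≤ a) (hab : a ≤ b) {G : ℝ → Matrix n n ℝ}
    {G₀ : Matrix n n ℝ} (hG : ∀ t, (G t).PosSemidef) (hG₀ : G₀.PosSemidef)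
    (hint : ∀ i j, IntervalIntegrable (fun t => G t i j) volume a b) :
    (infoMatrix a b G G₀).PosSemidef := by
  refine posSemidef_iff_dotProduct_mulVec.2
    ⟨isHermitian_infoMatrix (fun t => (hG t).1) hG₀.1, fun z => ?_⟩
  rw [star_trivial, dotProduct_infoMatrix_mulVec hint]
  have hG_nonneg := fun t => by simpa using (hG t).dotProduct_mulVec_nonneg z
  have hG₀_nonneg : 0 ≤ z ⬝ᵥ G₀ *ᵥ z := by simpa using hG₀.dotProduct_mulVec_nonneg z
  exact add_nonneg (integral_nonneg hab fun t _ => hG_nonneg t) (by positivity)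

theorem mul_dotProduct_infoMatrix_mulVec_le (ha : 0 ≤ a) (hab : a ≤ b)
    {G : ℝ → Matrix n n ℝ} {G₀ : Matrix n n ℝ} {H : ℝ → Matrix m m ℝ} {H₀ : Matrix m m ℝ}
    (hG : ∀ i j, IntervalIntegrable (fun t => G t i j) volume a b)
    (hH : ∀ i j, IntervalIntegrable (fun t => H t i j) volume a b) {c : ℝ} {x : n → ℝ}
    {y : m → ℝ} (hle : ∀ t, c * (y ⬝ᵥ H t *ᵥ y) ≤ x ⬝ᵥ G t *ᵥ x)
    (hle₀ : c * (y ⬝ᵥ H₀ *ᵥ y) ≤ x ⬝ᵥ G₀ *ᵥ x) :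
    c * (y ⬝ᵥ infoMatrix a b H H₀ *ᵥ y) ≤ x ⬝ᵥ infoMatrix a b G G₀ *ᵥ x := by
  rw [dotProduct_infoMatrix_mulVec hH, dotProduct_infoMatrix_mulVec hG, mul_add,
    ← intervalIntegral.integral_const_mul, mul_left_comm]
  gcongr ?_ + 1 / a * ?_
  exact integral_mono_on hab ((IntervalIntegrable.dotProduct_mulVec hH y).const_mul c)
    (IntervalIntegrable.dotProduct_mulVec hG x) fun t _ => hle t

end InformationMatrix

def blockDiagColumns {ι₁ ι₂ : Type*} (u : ι₁ → ℝ) (v : ι₂ → ℝ) : Matrix (ι₁ ⊕ ι₂) (Fin 2) ℝ :=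
  of fun i j =>
    Sum.elim (fun i1 => if j = 0 then u i1 else 0) (fun i2 => if j = 1 then v i2 else 0) i

section BlockDiagColumns

variable {ι₁ ι₂ : Type*}

@[simp]
theorem blockDiagColumns_inl_zero (u : ι₁ → ℝ) (v : ι₂ → ℝ) (i : ι₁) :
    blockDiagColumns u v (Sum.inl i) 0 = u i := rfl

@[simp]
theorem blockDiagColumns_inr_zero (u : ι₁ → ℝ) (v : ι₂ → ℝ) (i : ι₂) :
    blockDiagColumns u v (Sum.inr i) 0 = 0 := rfl

theorem contDiffOn_blockDiagColumns_apply {u : ℝ → ι₁ → ℝ} {v : ℝ → ι₂ → ℝ} {s : Set ℝ}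
    {k : WithTop ℕ∞} (hu : ∀ i, ContDiffOn ℝ k (fun t => u t i) s)
    (hv : ∀ i, ContDiffOn ℝ k (fun t => v t i) s) (i : ι₁ ⊕ ι₂) (j : Fin 2) :
    ContDiffOn ℝ k (fun t => blockDiagColumns (u t) (v t) i j) s := by
  rcases i with i | i <;> fin_cases j <;> simp [blockDiagColumns, hu, hv, contDiffOn_const]

end BlockDiagColumns

/-- Theorem 3.2 (models with no common parameters): the covariance of the BLUE of
`θ⁽¹⁾` from simultaneous estimation in the two dependent groups (the top-left block of
`M⁻¹`) is bounded above, in the Loewner ordering, by the covariance `σ1² M11⁻¹` of the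
BLUE obtained from the first group alone. -/
theorem simultaneous_estimation_no_common_parameters
    (p1 p2 : ℕ) (a b : ℝ) (ha : 0 < a) (hab : a < b)
    (σ1 σ2 ρ : ℝ) (hσ1 : 0 < σ1) (hσ2 : 0 < σ2) (hρ : ρ ∈ Set.Ioo (-1 : ℝ) 1)
    (Sig : Matrix (Fin 2) (Fin 2) ℝ)
    (hSig : Sig = !![σ1 ^ 2, ρ * σ1 * σ2; ρ * σ1 * σ2, σ2 ^ 2])
    (f1 : ℝ → Fin p1 → ℝ) (f2 : ℝ → Fin p2 → ℝ)
    (hf1 : ∀ i, ContDiffOn ℝ 1 (fun t => f1 t i) (Set.Icc a b))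
    (hf2 : ∀ i, ContDiffOn ℝ 1 (fun t => f2 t i) (Set.Icc a b))
    (F : ℝ → Matrix (Fin p1 ⊕ Fin p2) (Fin 2) ℝ)
    (hF : ∀ t, F t = Matrix.of fun i j => Sum.elim
        (fun i1 => if j = 0 then f1 t i1 else 0)
        (fun i2 => if j = 1 then f2 t i2 else 0) i)
    (Fdot : ℝ → Matrix (Fin p1 ⊕ Fin p2) (Fin 2) ℝ)
    (hFdot : ∀ t i j, Fdot t i j = deriv (fun s => F s i j) t)
    (f1dot : ℝ → Fin p1 → ℝ)
    (hf1dot : ∀ t i, f1dot t i = deriv (fun s => f1 s i) t)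
    (M : Matrix (Fin p1 ⊕ Fin p2) (Fin p1 ⊕ Fin p2) ℝ)
    (hM : M = (Matrix.of fun i j => ∫ t in a..b, (Fdot t * Sig⁻¹ * (Fdot t)ᵀ) i j)
        + (1 / a) • (F a * Sig⁻¹ * (F a)ᵀ))
    (M11 : Matrix (Fin p1) (Fin p1) ℝ)
    (hM11 : M11 = (Matrix.of fun i j => ∫ t in a..b, f1dot t i * f1dot t j)
        + (1 / a) • Matrix.vecMulVec (f1 a) (f1 a))
    (hMunit : IsUnit M) (hM11unit : IsUnit M11) :
    (σ1 ^ 2 • M11⁻¹ - (M⁻¹).toBlocks₁₁).PosSemidef := by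
  obtain rfl : F = fun t => blockDiagColumns (f1 t) (f2 t) := funext hF
  have hS : ∀ v, (σ1 ^ 2)⁻¹ * v 0 ^ 2 ≤ v ⬝ᵥ Sig⁻¹ *ᵥ v :=
    hSig ▸ inv_sq_mul_sq_le_dotProduct_inv_mulVec hσ1 hσ2 hρ
  have hSig_inv : Sig⁻¹.IsHermitian := by
    refine IsHermitian.inv ?_
    rw [hSig]; ext i j; fin_cases i <;> fin_cases j <;> simp [mul_comm]
  have hFdot_inl : ∀ t i, Fdot t (Sum.inl i) 0 = f1dot t i := by simp [hFdot, hf1dot]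
  have hFdot_inr : ∀ t i, Fdot t (Sum.inr i) 0 = 0 := by simp [hFdot]
  have hint : ∀ φ : Matrix (Fin p1 ⊕ Fin p2) (Fin 2) ℝ → ℝ, Continuous φ →
      IntervalIntegrable (fun t => φ (Fdot t)) volume a b := fun φ hφ =>
    intervalIntegrable_comp_entrywise_deriv hab (contDiffOn_blockDiagColumns_apply hf1 hf2) hFdot hφ
  have hgM : ∀ i j, IntervalIntegrable (fun t => (Fdot t * Sig⁻¹ * (Fdot t)ᵀ) i j) volume a b :=
    fun i j => hint (fun A => (A * Sig⁻¹ * Aᵀ) i j) (by fun_prop)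
  have hg11 : ∀ i j, IntervalIntegrable (fun t => vecMulVec (f1dot t) (f1dot t) i j) volume a b :=
    fun i j => by
      simpa only [hFdot_inl, vecMulVec_apply] using
        hint (fun A => A (Sum.inl i) 0 * A (Sum.inl j) 0) (by fun_prop)
  change M = infoMatrix a b (fun t => Fdot t * Sig⁻¹ * (Fdot t)ᵀ)
    (blockDiagColumns (f1 a) (f2 a) * Sig⁻¹ * (blockDiagColumns (f1 a) (f2 a))ᵀ) at hM
  change M11 = infoMatrix a b (fun t => vecMulVec (f1dot t) (f1dot t))
    (vecMulVec (f1 a) (f1 a)) at hM11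
  subst hM hM11
  refine posSemidef_smul_inv_sub_toBlocks₁₁_inv (by positivity)
    (isHermitian_infoMatrix (fun t => ?_) ?_) hMunit
    (posSemidef_infoMatrix ha.le hab.le (fun t => posSemidef_vecMulVec_self_star _)
      (posSemidef_vecMulVec_self_star _) hg11) hM11unit
    fun z => mul_dotProduct_infoMatrix_mulVec_le ha.le hab.le hgM hg11 (fun t => ?_) ?_
  · simpa using isHermitian_mul_mul_conjTranspose (Fdot t) hSig_inv
  · simpa using isHermitian_mul_mul_conjTranspose (blockDiagColumns (f1 a) (f2 a)) hSig_inv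
  · simpa [hFdot_inl] using mul_dotProduct_vecMulVec_le hS (Fdot t) (hFdot_inr t) z
  · simpa using mul_dotProduct_vecMulVec_le hS (blockDiagColumns (f1 a) (f2 a))
      (blockDiagColumns_inr_zero _ _) z
end

section
/- Let 0 < a < b, σ1, σ2 > 0, ρ ∈ (−1, 1), and let f0 : ℝ → ℝ^{p0}, g1 : ℝ → ℝ^{q1} and g2 : ℝ → ℝ^{q2} be continuously differentiable on [a, b]. Let Σ = [[σ1², ρσ1σ2], [ρσ1σ2, σ2²]] and let F : ℝ → ℝ^{(p0+q1+q2)×2} be the matrix whose first column is (f0(t)ᵀ, g1(t)ᵀ, 0)ᵀ and whose second column is (f0(t)ᵀ, 0, g2(t)ᵀ)ᵀ. Define the joint information matrix M := ∫_a^b Ḟ(t) Σ⁻¹ Ḟ(t)ᵀ dt + (1/a)·F(a) Σ⁻¹ F(a)ᵀ and the marginal information matrix M^{(1)} := ∫_a^b ḣ(t) ḣ(t)ᵀ dt + (1/a)·h(a) h(a)ᵀ, where h(t) := (f0(t)ᵀ, g1(t)ᵀ)ᵀ ∈ ℝ^{p0+q1}. If M and M^{(1)} are invertible, then σ1²·(M^{(1)})⁻¹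 minus the (p0+q1)×(p0+q1) submatrix of M⁻¹ corresponding to the first p0+q1 rows and columns is positive semidefinite. -/
/-!
Both information matrices have the shape `∫ₐᵇ Ġ W Ġᵀ dt + a⁻¹ G(a) W G(a)ᵀ`: `M` with `G = F`,
`W = Σ⁻¹`, and `M⁽¹⁾` with `G = h` (one column), `W = 1`. The first column of `F` is `(h, 0)`,
and `v₀² ≤ σ₁² vᵀ Σ⁻¹ v` for every `v`, so integrating gives `z₁ᵀ M⁽¹⁾ z₁ ≤ σ₁² zᵀ M z` for every
`z` extending `z₁`. Evaluated at `z = M⁻¹ (x, 0)` and combined with the Fenchel inequality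
`2 xᵀu - uᵀ N u ≤ xᵀ N⁻¹ x` for `N = M⁽¹⁾`, this becomes `xᵀ (M⁻¹)₁₁ x ≤ σ₁² xᵀ (M⁽¹⁾)⁻¹ x`.
-/

open Matrix MeasureTheory intervalIntegral

theorem intervalIntegrable_fun_sum {ι : Type*} [Fintype ι] {f : ι → ℝ → ℝ} {a b : ℝ}
    (hf : ∀ i, IntervalIntegrable (f i) volume a b) :
    IntervalIntegrable (fun t => ∑ i, f i t) volume a b := by
  simpa only [← Finset.sum_fn] using IntervalIntegrable.sum Finset.univ fun i _ => hf i

namespace Matrix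

variable {ι ι' κ : Type*} [Fintype ι] [Fintype ι'] [Fintype κ]

theorem IsHermitian.dotProduct_mulVec_comm {N : Matrix ι ι ℝ} (hN : N.IsHermitian)
    (x y : ι → ℝ) : x ⬝ᵥ (N *ᵥ y) = y ⬝ᵥ (N *ᵥ x) := by
  rw [dotProduct_mulVec, ← mulVec_transpose, ← conjTranspose_eq_transpose_of_trivial, hN,
    dotProduct_comm]

theorem dotProduct_mul_mul_transpose_mulVec (N : Matrix ι κ ℝ) (W : Matrix κ κ ℝ) (z : ι → ℝ) :
    z ⬝ᵥ ((N * W * Nᵀ) *ᵥ z) = (Nᵀ *ᵥ z) ⬝ᵥ (W *ᵥ (Nᵀ *ᵥ z)) := by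
  rw [← mulVec_mulVec, ← mulVec_mulVec, dotProduct_mulVec, ← mulVec_transpose]

theorem PosSemidef.two_mul_dotProduct_sub_le [DecidableEq ι] {N : Matrix ι ι ℝ}
    (hN : N.PosSemidef) (hdet : IsUnit N.det) (x u : ι → ℝ) :
    2 * (x ⬝ᵥ u) - u ⬝ᵥ (N *ᵥ u) ≤ x ⬝ᵥ (N⁻¹ *ᵥ x) := by
  set w := N⁻¹ *ᵥ x
  have hw : N *ᵥ w = x := by rw [mulVec_mulVec, mul_nonsing_inv N hdet, one_mulVec]
  have hsq := hN.dotProduct_mulVec_nonneg (u - w)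
  rw [star_trivial, mulVec_sub, hw, dotProduct_sub, sub_dotProduct, sub_dotProduct,
    hN.isHermitian.dotProduct_mulVec_comm w u, hw, dotProduct_comm u x, dotProduct_comm w x]
    at hsq
  linarith

theorem PosDef.sq_le_mul_dotProduct_inv_mulVec [DecidableEq κ] {S : Matrix κ κ ℝ}
    (hS : S.PosDef) (v : κ → ℝ) (k : κ) : v k ^ 2 ≤ S k k * (v ⬝ᵥ (S⁻¹ *ᵥ v)) := by
  have hSkk : 0 < S k k := hS.diag_pos
  -- the Fenchel inequality for `S⁻¹`, at the best multiple of `e_k`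
  have key := hS.inv.posSemidef.two_mul_dotProduct_sub_le
    ((isUnit_iff_isUnit_det _).1 hS.inv.isUnit) (Pi.single k (v k / S k k)) v
  rw [nonsing_inv_nonsing_inv S ((isUnit_iff_isUnit_det _).1 hS.isUnit)] at key
  simp only [single_dotProduct, mulVec_single, Pi.smul_apply, col_apply, op_smul_eq_mul] at key
  have : v k ^ 2 / S k k ≤ v ⬝ᵥ (S⁻¹ *ᵥ v) := by
    field_simp at key
    rw [div_le_iff₀ hSkk]
    nlinarith
  rwa [div_le_iff₀' hSkk] at this

theorem PosDef.sq_dotProduct_inl_le [DecidableEq κ] {S : Matrix κ κ ℝ} (hS : S.PosDef)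
    {N : Matrix (ι ⊕ ι') κ ℝ} {k : κ} {v : ι → ℝ} (hNv : ∀ i, N (Sum.inl i) k = v i)
    (hN0 : ∀ i, N (Sum.inr i) k = 0) (z : ι ⊕ ι' → ℝ) :
    (v ⬝ᵥ (z ∘ Sum.inl)) ^ 2 ≤ S k k * (z ⬝ᵥ ((N * S⁻¹ * Nᵀ) *ᵥ z)) := by
  have hcol : (Nᵀ *ᵥ z) k = v ⬝ᵥ (z ∘ Sum.inl) := by
    simp [mulVec, dotProduct, Fintype.sum_sum_type, hNv, hN0]
  rw [dotProduct_mul_mul_transpose_mulVec, ← hcol]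
  exact hS.sq_le_mul_dotProduct_inv_mulVec _ k

theorem posSemidef_smul_inv_sub_toBlocks₁₁ [DecidableEq ι] [DecidableEq ι']
    {M : Matrix (ι ⊕ ι') (ι ⊕ ι') ℝ} {N : Matrix ι ι ℝ} {c : ℝ} (hc : 0 < c) (hM : M.IsHermitian)
    (hN : N.PosSemidef) (hMdet : IsUnit M.det) (hNdet : IsUnit N.det)
    (hle : ∀ z, (z ∘ Sum.inl) ⬝ᵥ (N *ᵥ (z ∘ Sum.inl)) ≤ c * (z ⬝ᵥ (M *ᵥ z))) :
    (c • N⁻¹ - M⁻¹.toBlocks₁₁).PosSemidef := by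
  refine PosSemidef.of_dotProduct_mulVec_nonneg
    ((hN.isHermitian.inv.smul (IsSelfAdjoint.all c)).sub (hM.inv.submatrix Sum.inl)) fun x => ?_
  set z := M⁻¹ *ᵥ Sum.elim x 0
  set y := z ∘ Sum.inl
  have hz : M *ᵥ z = Sum.elim x 0 := by rw [mulVec_mulVec, mul_nonsing_inv M hMdet, one_mulVec]
  have hblock : x ⬝ᵥ (M⁻¹.toBlocks₁₁ *ᵥ x) = x ⬝ᵥ y := by
    simp [z, y, dotProduct, mulVec, toBlocks₁₁, Fintype.sum_sum_type]
  have hzMz : z ⬝ᵥ (M *ᵥ z) = x ⬝ᵥ y := by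
    rw [hz, dotProduct_comm]
    simp [y, dotProduct, Fintype.sum_sum_type]
  have hyNy : y ⬝ᵥ (N *ᵥ y) ≤ c * (x ⬝ᵥ y) := hzMz ▸ hle z
  have hF := hN.two_mul_dotProduct_sub_le hNdet x (c⁻¹ • y)
  rw [mulVec_smul, dotProduct_smul, smul_dotProduct, dotProduct_smul, smul_eq_mul, smul_eq_mul,
    smul_eq_mul] at hF
  have : c⁻¹ * (c⁻¹ * (y ⬝ᵥ (N *ᵥ y))) ≤ c⁻¹ * (x ⬝ᵥ y) :=
    calc c⁻¹ * (c⁻¹ * (y ⬝ᵥ (N *ᵥ y))) ≤ c⁻¹ * (c⁻¹ * (c * (x ⬝ᵥ y))) := by gcongr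
      _ = c⁻¹ * (x ⬝ᵥ y) := by field_simp
  rw [star_trivial, sub_mulVec, dotProduct_sub, smul_mulVec, dotProduct_smul, smul_eq_mul,
    hblock, sub_nonneg, ← inv_mul_le_iff₀ hc]
  linarith

theorem posDef_bivariateCovariance {σ₁ σ₂ ρ : ℝ} (hσ₁ : 0 < σ₁) (hσ₂ : 0 < σ₂)
    (hρ : ρ ∈ Set.Ioo (-1 : ℝ) 1) :
    (!![σ₁ ^ 2, ρ * σ₁ * σ₂; ρ * σ₁ * σ₂, σ₂ ^ 2] : Matrix (Fin 2) (Fin 2) ℝ).PosDef := by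
  refine PosDef.of_dotProduct_mulVec_pos ?_ fun x hx => ?_
  · ext i j
    fin_cases i <;> fin_cases j <;> simp [mul_comm]
  have hρ2 : 0 < 1 - ρ ^ 2 := by nlinarith [hρ.1, hρ.2]
  have hquad : star x ⬝ᵥ (!![σ₁ ^ 2, ρ * σ₁ * σ₂; ρ * σ₁ * σ₂, σ₂ ^ 2] *ᵥ x)
      = (σ₁ * x 0 + ρ * σ₂ * x 1) ^ 2 + (1 - ρ ^ 2) * (σ₂ * x 1) ^ 2 := by
    simp [dotProduct, mulVec, Fin.sum_univ_two]
    ring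
  rw [hquad]
  rcases eq_or_ne (x 1) 0 with h1 | h1
  · have h0 : x 0 ≠ 0 := fun h0 => hx (funext fun i => by fin_cases i <;> simp [h0, h1])
    simp only [h1, mul_zero, add_zero]
    positivity
  · exact add_pos_of_nonneg_of_pos (sq_nonneg _) (by positivity)

variable {a b : ℝ}

theorem intervalIntegrable_dotProduct_mulVec {A : ℝ → Matrix ι ι ℝ}
    (hA : ∀ i j, IntervalIntegrable (fun t => A t i j) volume a b) (x y : ι → ℝ) :
    IntervalIntegrable (fun t => x ⬝ᵥ (A t *ᵥ y)) volume a b := by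
  simp only [dotProduct, mulVec, Finset.mul_sum, ← mul_assoc]
  exact intervalIntegrable_fun_sum fun i => intervalIntegrable_fun_sum fun j =>
    ((hA i j).const_mul (x i)).mul_const (y j)

theorem dotProduct_mulVec_intervalIntegral {A : ℝ → Matrix ι ι ℝ}
    (hA : ∀ i j, IntervalIntegrable (fun t => A t i j) volume a b) (x y : ι → ℝ) :
    x ⬝ᵥ (of (fun i j => ∫ t in a..b, A t i j) *ᵥ y) = ∫ t in a..b, x ⬝ᵥ (A t *ᵥ y) := by
  have hint : ∀ i j, IntervalIntegrable (fun t => x i * A t i j * y j) volume a b := fun i j =>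
    ((hA i j).const_mul (x i)).mul_const (y j)
  simp only [dotProduct, mulVec, of_apply, Finset.mul_sum, ← mul_assoc]
  rw [integral_finsetSum fun i _ => intervalIntegrable_fun_sum fun j => hint i j]
  refine Finset.sum_congr rfl fun i _ => ?_
  rw [integral_finsetSum fun j _ => hint i j]
  refine Finset.sum_congr rfl fun j _ => ?_
  rw [intervalIntegral.integral_mul_const, intervalIntegral.integral_const_mul]

theorem posSemidef_intervalIntegral {A : ℝ → Matrix ι ι ℝ} (hab : a ≤ b)
    (hA : ∀ t, (A t).PosSemidef) (hint : ∀ i j, IntervalIntegrable (fun t => A t i j) volume a b) :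
    (of fun i j => ∫ t in a..b, A t i j).PosSemidef := by
  refine PosSemidef.of_dotProduct_mulVec_nonneg ?_ fun x => ?_
  · ext i j
    simp only [conjTranspose_apply, of_apply, star_trivial]
    exact integral_congr fun t _ => by simpa using (hA t).isHermitian.apply i j
  · rw [star_trivial, dotProduct_mulVec_intervalIntegral hint]
    exact integral_nonneg hab fun t _ => by simpa using (hA t).dotProduct_mulVec_nonneg x

end Matrix

section InformationMatrix

variable {ι ι' κ : Type*} [Fintype κ] {a b : ℝ}

noncomputable def Matrix.entrywiseDeriv (G : ℝ → Matrix ι κ ℝ) (t : ℝ) : Matrix ι κ ℝ :=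
  of fun i j => deriv (fun s => G s i j) t

noncomputable def informationMatrix (a b : ℝ) (G : ℝ → Matrix ι κ ℝ) (W : Matrix κ κ ℝ) :
    Matrix ι ι ℝ :=
  (of fun i j => ∫ t in a..b, (entrywiseDeriv G t * W * (entrywiseDeriv G t)ᵀ) i j)
    + (1 / a) • (G a * W * (G a)ᵀ)

variable {G : ℝ → Matrix ι κ ℝ}

theorem intervalIntegrable_entrywiseDeriv_mul_mul_transpose
    (hG : ∀ i j, ContDiffOn ℝ 1 (fun s => G s i j) (Set.Icc a b)) (hab : a < b)
    (W : Matrix κ κ ℝ) (i j : ι) :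
    IntervalIntegrable (fun t => (entrywiseDeriv G t * W * (entrywiseDeriv G t)ᵀ) i j)
      volume a b := by
  -- `deriv` agrees on `(a, b)` with `derivWithin _ (Icc a b)`, which is continuous on `[a, b]`
  set G' : ℝ → Matrix ι κ ℝ :=
    fun t => of fun i j => derivWithin (fun s => G s i j) (Set.Icc a b) t
  have hG' : ContinuousOn G' (Set.Icc a b) :=
    continuousOn_pi.2 fun i => continuousOn_pi.2 fun j =>
      (hG i j).continuousOn_derivWithin (uniqueDiffOn_Icc hab) le_rfl
  have hprod : ContinuousOn (fun t => G' t * W * (G' t)ᵀ) (Set.Icc a b) := by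
    rw [continuousOn_iff_continuous_domRestrict] at hG' ⊢
    exact (hG'.matrix_mul continuous_const).matrix_mul hG'.matrix_transpose
  refine (ContinuousOn.intervalIntegrable_of_Icc hab.le
    (continuousOn_pi.1 (continuousOn_pi.1 hprod i) j)).congr_uIoo fun t ht => ?_
  rw [Set.uIoo_of_le hab.le] at ht
  have : G' t = entrywiseDeriv G t := by
    ext i j
    exact derivWithin_of_mem_nhds (Icc_mem_nhds ht.1 ht.2)
  simp only [this]

theorem posSemidef_informationMatrix [Fintype ι]
    (hG : ∀ i j, ContDiffOn ℝ 1 (fun s => G s i j) (Set.Icc a b)) (ha : 0 ≤ a) (hab : a < b)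
    {W : Matrix κ κ ℝ} (hW : W.PosSemidef) : (informationMatrix a b G W).PosSemidef := by
  have hW' : ∀ N : Matrix ι κ ℝ, (N * W * Nᵀ).PosSemidef := fun N => by
    simpa using hW.mul_mul_conjTranspose_same N
  exact (posSemidef_intervalIntegral hab.le (fun t => hW' _)
    (intervalIntegrable_entrywiseDeriv_mul_mul_transpose hG hab W)).add
    ((hW' (G a)).smul (by positivity))

theorem dotProduct_informationMatrix_mulVec [Fintype ι]
    (hG : ∀ i j, ContDiffOn ℝ 1 (fun s => G s i j) (Set.Icc a b)) (hab : a < b)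
    (W : Matrix κ κ ℝ) (z : ι → ℝ) :
    z ⬝ᵥ (informationMatrix a b G W *ᵥ z) =
      (∫ t in a..b, z ⬝ᵥ ((entrywiseDeriv G t * W * (entrywiseDeriv G t)ᵀ) *ᵥ z))
        + 1 / a * (z ⬝ᵥ ((G a * W * (G a)ᵀ) *ᵥ z)) := by
  rw [informationMatrix, add_mulVec, dotProduct_add, dotProduct_mulVec_intervalIntegral
    (intervalIntegrable_entrywiseDeriv_mul_mul_transpose hG hab W), smul_mulVec, dotProduct_smul,
    smul_eq_mul]

theorem entrywiseDeriv_replicateCol (u : ℝ → ι → ℝ) (t : ℝ) :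
    entrywiseDeriv (fun s => replicateCol Unit (u s)) t =
      replicateCol Unit (fun i => deriv (fun s => u s i) t) :=
  rfl

theorem dotProduct_replicateCol_mul_one_mul_transpose_mulVec [Fintype ι] (v z : ι → ℝ) :
    z ⬝ᵥ ((replicateCol Unit v * (1 : Matrix Unit Unit ℝ) * (replicateCol Unit v)ᵀ) *ᵥ z) =
      (v ⬝ᵥ z) ^ 2 := by
  rw [Matrix.mul_one, transpose_replicateCol, ← vecMulVec_eq, vecMulVec_mulVec,
    dotProduct_comm v z]
  simp [sq]

theorem dotProduct_informationMatrix_replicateCol_le [Fintype ι] [Fintype ι'] [DecidableEq κ]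
    {S : Matrix κ κ ℝ} (hS : S.PosDef) {G : ℝ → Matrix (ι ⊕ ι') κ ℝ} {u : ℝ → ι → ℝ} {k : κ}
    (hG : ∀ i j, ContDiffOn ℝ 1 (fun s => G s i j) (Set.Icc a b)) (ha : 0 ≤ a) (hab : a < b)
    (hGu : ∀ s i, G s (Sum.inl i) k = u s i) (hG0 : ∀ s i, G s (Sum.inr i) k = 0)
    (z : ι ⊕ ι' → ℝ) :
    (z ∘ Sum.inl) ⬝ᵥ (informationMatrix a b (fun s => replicateCol Unit (u s)) 1 *ᵥ (z ∘ Sum.inl))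
      ≤ S k k * (z ⬝ᵥ (informationMatrix a b G S⁻¹ *ᵥ z)) := by
  have hu : ∀ i (j : Unit), ContDiffOn ℝ 1 (fun s => replicateCol Unit (u s) i j)
      (Set.Icc a b) :=
    fun i _ => by simpa only [replicateCol_apply, hGu] using hG (Sum.inl i) k
  rw [dotProduct_informationMatrix_mulVec hu hab, dotProduct_informationMatrix_mulVec hG hab,
    mul_add, ← intervalIntegral.integral_const_mul, mul_left_comm]
  refine add_le_add (integral_mono_on hab.le ?_ ?_ fun t _ => ?_)
    (mul_le_mul_of_nonneg_left ?_ (by positivity))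
  · exact intervalIntegrable_dotProduct_mulVec
      (intervalIntegrable_entrywiseDeriv_mul_mul_transpose hu hab 1) _ _
  · exact (intervalIntegrable_dotProduct_mulVec
      (intervalIntegrable_entrywiseDeriv_mul_mul_transpose hG hab S⁻¹) z z).const_mul _
  · rw [entrywiseDeriv_replicateCol, dotProduct_replicateCol_mul_one_mul_transpose_mulVec]
    exact hS.sq_dotProduct_inl_le (fun i => by simp [entrywiseDeriv, hGu])
      (fun i => by simp [entrywiseDeriv, hG0]) z
  · rw [dotProduct_replicateCol_mul_one_mul_transpose_mulVec]
    exact hS.sq_dotProduct_inl_le (hGu a) (hG0 a) z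

end InformationMatrix

/-- Theorem 3.3 (models sharing the common parameter `θ⁽⁰⁾`): the covariance of the
BLUE of `θ⁽¹⁾ = (θ⁽⁰⁾, θ̃⁽¹⁾)` from simultaneous estimation in the two dependent groups
(the leading `(p0+q1) × (p0+q1)` block of `M⁻¹`) is bounded above, in the Loewner
ordering, by the covariance `σ1² (M⁽¹⁾)⁻¹` obtained from the first group alone. -/
theorem simultaneous_estimation_common_parameters
    (p0 q1 q2 : ℕ) (a b : ℝ) (ha : 0 < a) (hab : a < b)
    (σ1 σ2 ρ : ℝ) (hσ1 : 0 < σ1) (hσ2 : 0 < σ2) (hρ : ρ ∈ Set.Ioo (-1 : ℝ) 1)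
    (Sig : Matrix (Fin 2) (Fin 2) ℝ)
    (hSig : Sig = !![σ1 ^ 2, ρ * σ1 * σ2; ρ * σ1 * σ2, σ2 ^ 2])
    (f0 : ℝ → Fin p0 → ℝ) (g1 : ℝ → Fin q1 → ℝ) (g2 : ℝ → Fin q2 → ℝ)
    (hf0 : ∀ i, ContDiffOn ℝ 1 (fun t => f0 t i) (Set.Icc a b))
    (hg1 : ∀ i, ContDiffOn ℝ 1 (fun t => g1 t i) (Set.Icc a b))
    (hg2 : ∀ i, ContDiffOn ℝ 1 (fun t => g2 t i) (Set.Icc a b))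
    (F : ℝ → Matrix ((Fin p0 ⊕ Fin q1) ⊕ Fin q2) (Fin 2) ℝ)
    (hF : ∀ t, F t = Matrix.of fun i j => Sum.elim
        (Sum.elim (fun i0 => f0 t i0) (fun i1 => if j = 0 then g1 t i1 else 0))
        (fun i2 => if j = 1 then g2 t i2 else 0) i)
    (Fdot : ℝ → Matrix ((Fin p0 ⊕ Fin q1) ⊕ Fin q2) (Fin 2) ℝ)
    (hFdot : ∀ t i j, Fdot t i j = deriv (fun s => F s i j) t)
    (h : ℝ → Fin p0 ⊕ Fin q1 → ℝ)
    (hh : ∀ t, h t = Sum.elim (f0 t) (g1 t))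
    (hdot : ℝ → Fin p0 ⊕ Fin q1 → ℝ)
    (hhdot : ∀ t i, hdot t i = deriv (fun s => h s i) t)
    (M : Matrix ((Fin p0 ⊕ Fin q1) ⊕ Fin q2) ((Fin p0 ⊕ Fin q1) ⊕ Fin q2) ℝ)
    (hM : M = (Matrix.of fun i j => ∫ t in a..b, (Fdot t * Sig⁻¹ * (Fdot t)ᵀ) i j)
        + (1 / a) • (F a * Sig⁻¹ * (F a)ᵀ))
    (M1 : Matrix (Fin p0 ⊕ Fin q1) (Fin p0 ⊕ Fin q1) ℝ)
    (hM1 : M1 = (Matrix.of fun i j => ∫ t in a..b, hdot t i * hdot t j)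
        + (1 / a) • Matrix.vecMulVec (h a) (h a))
    (hMunit : IsUnit M) (hM1unit : IsUnit M1) :
    (σ1 ^ 2 • M1⁻¹ - (M⁻¹).toBlocks₁₁).PosSemidef := by
  have hcol : ∀ s i, F s (Sum.inl i) 0 = h s i := fun s i => by
    rcases i with i | i <;> simp [hF, hh]
  have hcol0 : ∀ s i, F s (Sum.inr i) 0 = 0 := fun s i => by simp [hF]
  have hFC1 : ∀ i j, ContDiffOn ℝ 1 (fun s => F s i j) (Set.Icc a b) := by
    rintro ((i | i) | i) j <;> simp only [hF, of_apply, Sum.elim_inl, Sum.elim_inr]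
    · exact hf0 i
    · split_ifs
      exacts [hg1 i, contDiffOn_const]
    · split_ifs
      exacts [hg2 i, contDiffOn_const]
  have hhC1 : ∀ i (j : Unit), ContDiffOn ℝ 1 (fun s => replicateCol Unit (h s) i j)
      (Set.Icc a b) := fun i _ => by
    simpa only [replicateCol_apply, hcol] using hFC1 (Sum.inl i) 0
  have hMeq : M = informationMatrix a b F Sig⁻¹ := by
    rw [hM, show Fdot = entrywiseDeriv F from funext fun t => ext (hFdot t)]
    rfl
  have hM1eq : M1 = informationMatrix a b (fun s => replicateCol Unit (h s)) 1 := by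
    rw [hM1, informationMatrix, Matrix.mul_one, transpose_replicateCol, ← vecMulVec_eq]
    congr
    ext i j
    simp [mul_apply, entrywiseDeriv, hhdot]
  have hSigPD : Sig.PosDef := hSig ▸ posDef_bivariateCovariance hσ1 hσ2 hρ
  subst hMeq hM1eq
  rw [show σ1 ^ 2 = Sig 0 0 by simp [hSig]]
  exact posSemidef_smul_inv_sub_toBlocks₁₁ hSigPD.diag_pos
    (posSemidef_informationMatrix hFC1 ha.le hab hSigPD.inv.posSemidef).isHermitian
    (posSemidef_informationMatrix hhC1 ha.le hab PosSemidef.one)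
    ((isUnit_iff_isUnit_det _).1 hMunit) ((isUnit_iff_isUnit_det _).1 hM1unit)
    (dotProduct_informationMatrix_replicateCol_le hSigPD hFC1 ha.le hab hcol hcol0)
end

section
/- Let 0 < a < b, σ1, σ2 > 0, ρ ∈ (−1, 1), let Σ = [[σ1², ρσ1σ2], [ρσ1σ2, σ2²]], let f : ℝ → ℝ^p be continuously differentiable on [a, b], and let F(t) := I_2 ⊗ f(t) ∈ ℝ^{2p×2} (Kronecker product of the 2×2 identity with the column vector f(t)). Define M := ∫_a^b Ḟ(t) Σ⁻¹ Ḟ(t)ᵀ dt + (1/a)·F(a) Σ⁻¹ F(a)ᵀ and M11 := ∫_a^b ḟ(t) ḟ(t)ᵀ dt + (1/a)·f(a) f(a)ᵀ. Then M = Σ⁻¹ ⊗ M11 (Kronecker product), and if M11 is invertible, then M is invertible with M⁻¹ = Σ ⊗ M11⁻¹; in particular the top-left p×p block of M⁻¹ equals σ1²·M11⁻¹ and the bottom-right p×p block equals σ2²·M11⁻¹. -/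
open Matrix MeasureTheory intervalIntegral Kronecker

/-! Since `F(t) = I₂ ⊗ f(t)`, each sandwich `F Σ⁻¹ Fᵀ` equals `Σ⁻¹ ⊗ f fᵀ`; as `Ḟ = I₂ ⊗ ḟ` and
`Σ⁻¹` does not depend on `t`, it comes out of the integral and `M = Σ⁻¹ ⊗ M11`. As
`det Σ = σ1² σ2² (1 - ρ²) ≠ 0`, inverting a Kronecker product factorwise gives `M⁻¹ = Σ ⊗ M11⁻¹`,
whose diagonal blocks are `Σ_ℓℓ • M11⁻¹`. -/

namespace Matrix

section Kronecker

variable {R : Type*} {l m n p : Type*}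

/-- `Iₙ ⊗ v` for a column `v`, with the trivial `Fin 1` column index dropped. -/
def oneKroneckerCol (n : Type*) [DecidableEq n] [MulZeroOneClass R] (v : m → R) :
    Matrix (n × m) n R :=
  ((1 : Matrix n n R) ⊗ₖ replicateCol (Fin 1) v).submatrix id (fun j => (j, 0))

theorem oneKroneckerCol_apply [DecidableEq n] [MulZeroOneClass R] (v : m → R)
    (i : n × m) (j : n) : oneKroneckerCol n v i j = if i.1 = j then v i.2 else 0 := by
  simp [oneKroneckerCol, kroneckerMap_apply, one_apply, ite_mul]

theorem oneKroneckerCol_mul_mul_transpose [Fintype n] [DecidableEq n] [CommSemiring R]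
    (S : Matrix n n R) (v : m → R) :
    oneKroneckerCol n v * S * (oneKroneckerCol n v)ᵀ = S ⊗ₖ vecMulVec v v := by
  ext ⟨i, k⟩ ⟨j, k'⟩
  simp only [mul_apply, transpose_apply, oneKroneckerCol_apply, kroneckerMap_apply,
    vecMulVec_apply, ite_mul, zero_mul, mul_ite, mul_zero, Finset.sum_ite_eq,
    Finset.mem_univ, if_true]
  ring

theorem submatrix_kronecker_prodMk [Mul R] (A : Matrix l m R) (B : Matrix n p R) (i : l) (j : m) :
    (A ⊗ₖ B).submatrix (fun k => (i, k)) (fun k => (j, k)) = A i j • B :=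
  rfl

theorem isUnit_kronecker [Fintype m] [Fintype n] [DecidableEq m] [DecidableEq n] [CommRing R]
    {A : Matrix m m R} {B : Matrix n n R} (hA : IsUnit A) (hB : IsUnit B) : IsUnit (A ⊗ₖ B) := by
  rw [isUnit_iff_isUnit_det, det_kronecker]
  exact (((isUnit_iff_isUnit_det A).1 hA).pow _).mul (((isUnit_iff_isUnit_det B).1 hB).pow _)

theorem of_intervalIntegral_kronecker_left (S : Matrix l m ℝ)
    (A : ℝ → Matrix n p ℝ) (a b : ℝ) :
    of (fun i j => ∫ t in a..b, (S ⊗ₖ A t) i j) = S ⊗ₖ of (fun i j => ∫ t in a..b, A t i j) := by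
  ext
  simp [kroneckerMap_apply, intervalIntegral.integral_const_mul]

end Kronecker

end Matrix

theorem deriv_oneKroneckerCol_apply {𝕜 m n : Type*} [NontriviallyNormedField 𝕜] [DecidableEq n]
    (f : 𝕜 → m → 𝕜) (t : 𝕜) (i : n × m) (j : n) :
    deriv (fun s => oneKroneckerCol n (f s) i j) t
      = oneKroneckerCol n (fun k => deriv (fun s => f s k) t) i j := by
  simp only [oneKroneckerCol_apply]
  split_ifs <;> simp

theorem det_bivariate_covariance {R : Type*} [CommRing R] (σ1 σ2 ρ : R) :
    det !![σ1 ^ 2, ρ * σ1 * σ2; ρ * σ1 * σ2, σ2 ^ 2] = σ1 ^ 2 * σ2 ^ 2 * (1 - ρ ^ 2) := by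
  rw [det_fin_two_of]
  ring

theorem equal_regression_functions_kronecker_general
    (p : ℕ) (a b : ℝ)
    (σ1 σ2 ρ : ℝ) (hσ1 : 0 < σ1) (hσ2 : 0 < σ2) (hρ : ρ ∈ Set.Ioo (-1 : ℝ) 1)
    (Sig : Matrix (Fin 2) (Fin 2) ℝ)
    (hSig : Sig = !![σ1 ^ 2, ρ * σ1 * σ2; ρ * σ1 * σ2, σ2 ^ 2])
    (f : ℝ → Fin p → ℝ)
    (F : ℝ → Matrix (Fin 2 × Fin p) (Fin 2) ℝ)
    (hF : ∀ t, F t = ((1 : Matrix (Fin 2) (Fin 2) ℝ) ⊗ₖ Matrix.replicateCol (Fin 1) (f t)).submatrix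
        id (fun j : Fin 2 => (j, (0 : Fin 1))))
    (Fdot : ℝ → Matrix (Fin 2 × Fin p) (Fin 2) ℝ)
    (hFdot : ∀ t i j, Fdot t i j = deriv (fun s => F s i j) t)
    (fdot : ℝ → Fin p → ℝ)
    (hfdot : ∀ t i, fdot t i = deriv (fun s => f s i) t)
    (M : Matrix (Fin 2 × Fin p) (Fin 2 × Fin p) ℝ)
    (hM : M = (Matrix.of fun i j => ∫ t in a..b, (Fdot t * Sig⁻¹ * (Fdot t)ᵀ) i j)
        + (1 / a) • (F a * Sig⁻¹ * (F a)ᵀ))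
    (M11 : Matrix (Fin p) (Fin p) ℝ)
    (hM11 : M11 = (Matrix.of fun i j => ∫ t in a..b, fdot t i * fdot t j)
        + (1 / a) • Matrix.vecMulVec (f a) (f a)) :
    M = Sig⁻¹ ⊗ₖ M11 ∧
    (IsUnit M11 →
      IsUnit M ∧ M⁻¹ = Sig ⊗ₖ M11⁻¹ ∧
      (M⁻¹).submatrix (fun i : Fin p => ((0 : Fin 2), i)) (fun j : Fin p => ((0 : Fin 2), j))
        = σ1 ^ 2 • M11⁻¹ ∧
      (M⁻¹).submatrix (fun i : Fin p => ((1 : Fin 2), i)) (fun j : Fin p => ((1 : Fin 2), j))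
        = σ2 ^ 2 • M11⁻¹) := by
  have hF' : F = fun t => oneKroneckerCol (Fin 2) (f t) := funext hF
  have hFdot' : Fdot = fun t => oneKroneckerCol (Fin 2) (fdot t) := by
    ext t i j
    rw [hFdot, hF', deriv_oneKroneckerCol_apply, ← funext (hfdot t)]
  have hM_eq : M = Sig⁻¹ ⊗ₖ M11 := by
    rw [hM, hM11, hFdot', hF']
    simp only [oneKroneckerCol_mul_mul_transpose, of_intervalIntegral_kronecker_left,
      kronecker_add, kronecker_smul, vecMulVec_apply]
  have hSig_det : IsUnit Sig.det := by
    rw [hSig, det_bivariate_covariance, isUnit_iff_ne_zero]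
    have : 0 < 1 - ρ ^ 2 := by nlinarith [hρ.1, hρ.2]
    positivity
  refine ⟨hM_eq, fun hM11_unit => ?_⟩
  have hM_inv : M⁻¹ = Sig ⊗ₖ M11⁻¹ := by
    rw [hM_eq, inv_kronecker, nonsing_inv_nonsing_inv Sig hSig_det]
  have hSig_inv_unit : IsUnit Sig⁻¹ :=
    isUnit_nonsing_inv_iff.2 ((isUnit_iff_isUnit_det _).2 hSig_det)
  refine ⟨hM_eq ▸ isUnit_kronecker hSig_inv_unit hM11_unit, hM_inv, ?_, ?_⟩ <;>
    simp [hM_inv, submatrix_kronecker_prodMk, hSig]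

/-- Corollary after Remark 3.1 (equal regression functions `f1 = f2 = f`): the joint
information matrix factorizes as `M = Σ⁻¹ ⊗ M11`, hence `M⁻¹ = Σ ⊗ M11⁻¹`, so the
diagonal blocks of the covariance of the joint BLUE are `σ1² M11⁻¹` and `σ2² M11⁻¹`,
i.e. simultaneous estimation brings no improvement. -/
theorem equal_regression_functions_kronecker
    (p : ℕ) (a b : ℝ) (ha : 0 < a) (hab : a < b)
    (σ1 σ2 ρ : ℝ) (hσ1 : 0 < σ1) (hσ2 : 0 < σ2) (hρ : ρ ∈ Set.Ioo (-1 : ℝ) 1)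
    (Sig : Matrix (Fin 2) (Fin 2) ℝ)
    (hSig : Sig = !![σ1 ^ 2, ρ * σ1 * σ2; ρ * σ1 * σ2, σ2 ^ 2])
    (f : ℝ → Fin p → ℝ)
    (hf : ∀ i, ContDiffOn ℝ 1 (fun t => f t i) (Set.Icc a b))
    (F : ℝ → Matrix (Fin 2 × Fin p) (Fin 2) ℝ)
    (hF : ∀ t, F t = ((1 : Matrix (Fin 2) (Fin 2) ℝ) ⊗ₖ Matrix.replicateCol (Fin 1) (f t)).submatrix
        id (fun j : Fin 2 => (j, (0 : Fin 1))))
    (Fdot : ℝ → Matrix (Fin 2 × Fin p) (Fin 2) ℝ)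
    (hFdot : ∀ t i j, Fdot t i j = deriv (fun s => F s i j) t)
    (fdot : ℝ → Fin p → ℝ)
    (hfdot : ∀ t i, fdot t i = deriv (fun s => f s i) t)
    (M : Matrix (Fin 2 × Fin p) (Fin 2 × Fin p) ℝ)
    (hM : M = (Matrix.of fun i j => ∫ t in a..b, (Fdot t * Sig⁻¹ * (Fdot t)ᵀ) i j)
        + (1 / a) • (F a * Sig⁻¹ * (F a)ᵀ))
    (M11 : Matrix (Fin p) (Fin p) ℝ)
    (hM11 : M11 = (Matrix.of fun i j => ∫ t in a..b, fdot t i * fdot t j)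
        + (1 / a) • Matrix.vecMulVec (f a) (f a)) :
    M = Sig⁻¹ ⊗ₖ M11 ∧
    (IsUnit M11 →
      IsUnit M ∧ M⁻¹ = Sig ⊗ₖ M11⁻¹ ∧
      (M⁻¹).submatrix (fun i : Fin p => ((0 : Fin 2), i)) (fun j : Fin p => ((0 : Fin 2), j))
        = σ1 ^ 2 • M11⁻¹ ∧
      (M⁻¹).submatrix (fun i : Fin p => ((1 : Fin 2), i)) (fun j : Fin p => ((1 : Fin 2), j))
        = σ2 ^ 2 • M11⁻¹) :=
  equal_regression_functions_kronecker_general p a b σ1 σ2 ρ hσ1 hσ2 hρ Sig hSig f F hF Fdot hFdot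
    fdot hfdot M hM M11 hM11
end
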